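/- Let H, Ĥ ∈ ℂ^{d×d} be Hermitian with spectral decompositions tH = −QΘQ† and tĤ = −Q̂Θ̂Q̂†, where Θ = diag(θ_j), Θ̂ = diag(θ̂_j) with all θ_j, θ̂_j ∈ [0, π] (so all differences θ̂_j − θ_k lie in [−π, π]), and Q, Q̂ unitary. Then (4t²/π²)‖Ĥ − H‖_F² ≤ ‖exp(−itĤ) − exp(−itH)‖_F². -/

import Mathlib

open Matrix

noncomputable def frob {d : ℕ} (A : Matrix (Fin d) (Fin d) ℂ) : ℝ :=
  Real.sqrt (∑ i, ∑ j, ‖A i j‖ ^ 2)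


lemma jordan_aux {x : ℝ} (h0 : 0 ≤ x) (hx : x ≤ Real.pi) :
    2 / Real.pi ^ 2 * x ^ 2 ≤ 1 - Real.cos x := by
  have hπ := Real.pi_pos
  have hs := Real.mul_le_sin (x := x / 2) (by linarith) (by linarith)
  have hxs : x / Real.pi ≤ Real.sin (x / 2) := by
    calc x / Real.pi = 2 / Real.pi * (x / 2) := by ring
    _ ≤ _ := hs
  have h1 : (x / Real.pi) ^ 2 ≤ Real.sin (x / 2) ^ 2 :=
    pow_le_pow_left₀ (by positivity) hxs 2
  have hc := Real.cos_sq (x / 2)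
  have hsc := Real.sin_sq_add_cos_sq (x / 2)
  have h2 : (2 : ℝ) * (x / 2) = x := by ring
  rw [h2] at hc
  rw [div_pow] at h1
  have hπ2 : (0:ℝ) < Real.pi ^ 2 := by positivity
  rw [div_le_iff₀ hπ2] at h1
  rw [div_mul_eq_mul_div, div_le_iff₀ hπ2]
  nlinarith [h1]

lemma jordan {x : ℝ} (hx : |x| ≤ Real.pi) :
    2 / Real.pi ^ 2 * x ^ 2 ≤ 1 - Real.cos x := by
  rw [abs_le] at hx
  rcases le_or_gt 0 x with h | h
  · exact jordan_aux h hx.2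
  · have := jordan_aux (x := -x) (by linarith) (by linarith)
    simpa using this

lemma norm_exp_mul_I_sub (a b : ℝ) :
    ‖Complex.exp (a * Complex.I) - Complex.exp (b * Complex.I)‖ ^ 2
      = 2 - 2 * Real.cos (a - b) := by
  rw [Complex.sq_norm, Complex.normSq_sub]
  have h1 : ∀ y : ℝ, Complex.normSq (Complex.exp (y * Complex.I)) = 1 := by
    intro y
    rw [← Complex.sq_norm, Complex.norm_exp_ofReal_mul_I]; norm_num
  have h2 : (starRingEnd ℂ) (Complex.exp (b * Complex.I))
      = Complex.exp (((-b : ℝ) : ℂ) * Complex.I) := by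
    rw [← Complex.exp_conj]
    congr 1
    simp [Complex.conj_I]
  rw [h1, h1, h2, ← Complex.exp_add]
  have h3 : (a : ℂ) * Complex.I + ((-b : ℝ) : ℂ) * Complex.I
      = ((a - b : ℝ) : ℂ) * Complex.I := by push_cast; ring
  rw [h3, Complex.exp_ofReal_mul_I_re]
  ring

lemma sum_sq_eq_trace {d : ℕ} (A : Matrix (Fin d) (Fin d) ℂ) :
    ∑ i, ∑ j, ‖A i j‖ ^ 2 = (Matrix.trace (Aᴴ * A)).re := by
  rw [Matrix.trace]
  simp only [Matrix.diag, Matrix.mul_apply, Matrix.conjTranspose_apply]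
  rw [Complex.re_sum]
  rw [Finset.sum_comm]
  congr 1; ext j
  rw [Complex.re_sum]
  congr 1; ext i
  rw [Complex.star_def, ← Complex.normSq_eq_conj_mul_self, Complex.ofReal_re,
    Complex.sq_norm]

lemma frob_sum_conj {d : ℕ} (U V A : Matrix (Fin d) (Fin d) ℂ)
    (hU : Uᴴ * U = 1) (hV : Vᴴ * V = 1) :
    ∑ i, ∑ j, ‖(U * A * Vᴴ) i j‖ ^ 2 = ∑ i, ∑ j, ‖A i j‖ ^ 2 := by
  rw [sum_sq_eq_trace, sum_sq_eq_trace]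
  have key : (U * A * Vᴴ)ᴴ * (U * A * Vᴴ) = V * (Aᴴ * A) * Vᴴ := by
    simp only [Matrix.conjTranspose_mul, Matrix.conjTranspose_conjTranspose,
      Matrix.mul_assoc]
    rw [← Matrix.mul_assoc Uᴴ U, hU, Matrix.one_mul]
  rw [key, Matrix.trace_mul_cycle, hV, Matrix.one_mul]


lemma conj_sub_lemma {d : ℕ} (Q Qhat D Dh : Matrix (Fin d) (Fin d) ℂ)
    (hQ' : Q * Qᴴ = 1) (hQhat' : Qhat * Qhatᴴ = 1) :
    Qhat * ((Qhatᴴ * Q) * D - Dh * (Qhatᴴ * Q)) * Qᴴ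
      = Q * D * Qᴴ - Qhat * Dh * Qhatᴴ := by
  simp only [Matrix.mul_sub, Matrix.sub_mul, Matrix.mul_assoc]
  rw [← Matrix.mul_assoc Qhat Qhatᴴ, hQhat', Matrix.one_mul, hQ', Matrix.mul_one]

lemma exp_formula {d : ℕ} (t : ℝ) (A U : Matrix (Fin d) (Fin d) ℂ) (v : Fin d → ℝ)
    (hU : Uᴴ * U = 1) (hU' : U * Uᴴ = 1)
    (hs : (t : ℂ) • A = -(U * Matrix.diagonal (fun j => (v j : ℂ)) * Uᴴ)) :
    NormedSpace.exp ((-(Complex.I * t)) • A)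
      = U * Matrix.diagonal (fun j => Complex.exp ((v j : ℂ) * Complex.I)) * Uᴴ := by
  have h1 : (-(Complex.I * (t : ℂ))) • A
      = U * Matrix.diagonal (fun j => Complex.I * (v j : ℂ)) * Uᴴ := by
    have e1 : (-(Complex.I * (t:ℂ))) • A = (-Complex.I) • ((t : ℂ) • A) := by
      rw [smul_smul]; ring_nf
    rw [e1, hs, smul_neg, neg_smul, neg_neg]
    have e2 : Matrix.diagonal (fun j => Complex.I * (v j : ℂ))
        = Complex.I • Matrix.diagonal (fun j => (v j : ℂ)) := by
      rw [← Matrix.diagonal_smul]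
      rfl
    rw [e2, mul_smul_comm, smul_mul_assoc]
  have Uu : (Matrix (Fin d) (Fin d) ℂ)ˣ := ⟨U, Uᴴ, hU', hU⟩
  have h2 : NormedSpace.exp
        (U * Matrix.diagonal (fun j => Complex.I * (v j : ℂ)) * Uᴴ)
      = U * NormedSpace.exp (Matrix.diagonal fun j => Complex.I * (v j : ℂ)) * Uᴴ :=
    Matrix.exp_units_conj (⟨U, Uᴴ, hU', hU⟩ : (Matrix (Fin d) (Fin d) ℂ)ˣ) _
  rw [h1, h2, Matrix.exp_diagonal]
  have h3 : (NormedSpace.exp fun j => Complex.I * (v j : ℂ))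
      = fun j => Complex.exp ((v j : ℂ) * Complex.I) := by
    rw [Pi.exp_def]
    funext j
    simp only [← Complex.exp_eq_exp_ℂ]
    rw [mul_comm]
  rw [h3, Matrix.mul_assoc]

theorem hamiltonian_error_bound {d : ℕ} (t : ℝ) (ht : 0 < t)
    (H Hhat Q Qhat : Matrix (Fin d) (Fin d) ℂ) (θ θhat : Fin d → ℝ)
    (hH : H.IsHermitian) (hHhat : Hhat.IsHermitian)
    (hQ : Qᴴ * Q = 1) (hQhat : Qhatᴴ * Qhat = 1)
    (hθ : ∀ j, θ j ∈ Set.Icc (0 : ℝ) Real.pi)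
    (hθhat : ∀ j, θhat j ∈ Set.Icc (0 : ℝ) Real.pi)
    (hspec : (t : ℂ) • H = -(Q * Matrix.diagonal (fun j => (θ j : ℂ)) * Qᴴ))
    (hspechat : (t : ℂ) • Hhat = -(Qhat * Matrix.diagonal (fun j => (θhat j : ℂ)) * Qhatᴴ)) :
    (4 * t ^ 2 / Real.pi ^ 2) * frob (Hhat - H) ^ 2 ≤
      frob (NormedSpace.exp ((-(Complex.I * t)) • Hhat)
        - NormedSpace.exp ((-(Complex.I * t)) • H)) ^ 2 := by
  have hπ := Real.pi_pos
  have hQ' : Q * Qᴴ = 1 := mul_eq_one_comm.mp hQ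
  have hQhat' : Qhat * Qhatᴴ = 1 := mul_eq_one_comm.mp hQhat
  set M := Qhatᴴ * Q with hM
  set D := Matrix.diagonal (fun j => (θ j : ℂ)) with hD
  set Dh := Matrix.diagonal (fun j => (θhat j : ℂ)) with hDh
  set Eθ := Matrix.diagonal (fun j => Complex.exp ((θ j : ℂ) * Complex.I)) with hEθ
  set Eh := Matrix.diagonal (fun j => Complex.exp ((θhat j : ℂ) * Complex.I)) with hEh
  have hfrob : ∀ (A : Matrix (Fin d) (Fin d) ℂ),
      frob A ^ 2 = ∑ i, ∑ j, ‖A i j‖ ^ 2 := by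
    intro A
    rw [frob, Real.sq_sqrt (by positivity)]
  -- step 1
  have key1 : (t : ℂ) • (Hhat - H) = Qhat * (M * D - Dh * M) * Qᴴ := by
    rw [hM, conj_sub_lemma Q Qhat D Dh hQ' hQhat', smul_sub, hspec, hspechat]
    abel
  have hS1 : t ^ 2 * frob (Hhat - H) ^ 2
      = ∑ j, ∑ k, (θhat j - θ k) ^ 2 * ‖M j k‖ ^ 2 := by
    rw [hfrob]
    have e1 : t ^ 2 * ∑ i, ∑ j, ‖(Hhat - H) i j‖ ^ 2
        = ∑ i, ∑ j, ‖((t : ℂ) • (Hhat - H)) i j‖ ^ 2 := by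
      simp only [Finset.mul_sum, Matrix.smul_apply, norm_smul, mul_pow,
        Complex.norm_real, Real.norm_eq_abs, sq_abs]
    rw [e1, key1, frob_sum_conj _ _ _ hQhat hQ]
    apply Finset.sum_congr rfl; intro j _
    apply Finset.sum_congr rfl; intro k _
    rw [Matrix.sub_apply, hD, hDh, Matrix.mul_diagonal, Matrix.diagonal_mul]
    have e2 : M j k * (θ k : ℂ) - (θhat j : ℂ) * M j k
        = ((θhat j - θ k : ℝ) : ℂ) * (-(M j k)) := by push_cast; ring
    rw [e2, norm_mul, mul_pow, Complex.norm_real, Real.norm_eq_abs, sq_abs, norm_neg]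
  -- step 2
  have key2 : NormedSpace.exp ((-(Complex.I * t)) • Hhat)
        - NormedSpace.exp ((-(Complex.I * t)) • H)
      = -(Qhat * (M * Eθ - Eh * M) * Qᴴ) := by
    rw [exp_formula t Hhat Qhat θhat hQhat hQhat' hspechat,
      exp_formula t H Q θ hQ hQ' hspec, hM,
      conj_sub_lemma Q Qhat Eθ Eh hQ' hQhat']
    abel
  have hS2 : frob (NormedSpace.exp ((-(Complex.I * t)) • Hhat)
        - NormedSpace.exp ((-(Complex.I * t)) • H)) ^ 2
      = ∑ j, ∑ k, (2 - 2 * Real.cos (θhat j - θ k)) * ‖M j k‖ ^ 2 := by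
    rw [hfrob, key2]
    simp only [Matrix.neg_apply, norm_neg]
    rw [frob_sum_conj _ _ _ hQhat hQ]
    apply Finset.sum_congr rfl; intro j _
    apply Finset.sum_congr rfl; intro k _
    rw [Matrix.sub_apply, hEθ, hEh, Matrix.mul_diagonal, Matrix.diagonal_mul]
    have e2 : M j k * Complex.exp ((θ k : ℂ) * Complex.I)
          - Complex.exp ((θhat j : ℂ) * Complex.I) * M j k
        = (Complex.exp ((θhat j : ℂ) * Complex.I)
            - Complex.exp ((θ k : ℂ) * Complex.I)) * (-(M j k)) := by ring
    rw [e2, norm_mul, mul_pow, norm_neg, norm_exp_mul_I_sub]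
  -- conclude
  have lhs_eq : (4 * t ^ 2 / Real.pi ^ 2) * frob (Hhat - H) ^ 2
      = (4 / Real.pi ^ 2) * (t ^ 2 * frob (Hhat - H) ^ 2) := by ring
  rw [lhs_eq, hS1, hS2, Finset.mul_sum]
  apply Finset.sum_le_sum; intro j _
  rw [Finset.mul_sum]
  apply Finset.sum_le_sum; intro k _
  have hj := hθhat j
  have hk := hθ k
  simp only [Set.mem_Icc] at hj hk
  have habs : |θhat j - θ k| ≤ Real.pi := by
    rw [abs_le]; constructor <;> linarith [hj.1, hj.2, hk.1, hk.2]
  have hjo := jordan habs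
  have hmul := mul_le_mul_of_nonneg_right hjo (sq_nonneg ‖M j k‖)
  have e3 : 4 / Real.pi ^ 2 * ((θhat j - θ k) ^ 2 * ‖M j k‖ ^ 2)
      = 2 * (2 / Real.pi ^ 2 * (θhat j - θ k) ^ 2 * ‖M j k‖ ^ 2) := by ring
  have e4 : (2 - 2 * Real.cos (θhat j - θ k)) * ‖M j k‖ ^ 2
      = 2 * ((1 - Real.cos (θhat j - θ k)) * ‖M j k‖ ^ 2) := by ring
  rw [e3, e4]
  linarith [hmul]
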